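/- Fidelity between Choi matrices of qubit amplitude damping channels: For q ∈ [0,1], let ρ_q be the 4×4 complex matrix with rows (1/2, 0, 0, √(1−q)/2), (0, q/2, 0, 0), (0, 0, 0, 0), (√(1−q)/2, 0, 0, (1−q)/2). Then each ρ_q is a density matrix on ℂ⁴, and for all q0, q1 ∈ [0,1], F(ρ_{q0}, ρ_{q1}) = (1 + √((1−q0)·(1−q1)) + √(q0·q1)) / 2. -/

import Mathlib

open Matrix BigOperators Finset ComplexOrder

noncomputable section

/-- A density matrix: positive semidefinite with unit trace. -/
def IsDensityMatrix {ι : Type*} [Fintype ι] (ρ : Matrix ι ι ℂ) : Prop :=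
  ρ.PosSemidef ∧ ρ.trace = 1

/-- The Helstrom minimum error probability for discriminating the states `ρ n`
with prior probabilities `p n`, optimized over all POVMs. -/
def helstrom {ι : Type*} [Fintype ι] [DecidableEq ι] {m : ℕ}
    (ρ : Fin m → Matrix ι ι ℂ) (p : Fin m → ℝ) : ℝ :=
  1 - sSup { x : ℝ | ∃ M : Fin m → Matrix ι ι ℂ,
      (∀ n, (M n).PosSemidef) ∧ (∑ n, M n) = 1 ∧
      x = ∑ n, p n * ((M n * ρ n).trace).re }

open Classical in
/-- The positive semidefinite square root (junk value `0` off the PSD cone). -/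
def psdSqrt {ι : Type*} [Fintype ι] [DecidableEq ι] (A : Matrix ι ι ℂ) : Matrix ι ι ℂ :=
  if h : A.PosSemidef then
    h.1.eigenvectorUnitary.1 * diagonal ((↑) ∘ (Real.sqrt ·) ∘ h.1.eigenvalues) *
      (star h.1.eigenvectorUnitary : Matrix ι ι ℂ)
  else 0

/-- The trace norm `‖A‖₁ = tr √(Aᴴ A)`. -/
def traceNorm {ι : Type*} [Fintype ι] [DecidableEq ι] (A : Matrix ι ι ℂ) : ℝ :=
  ((psdSqrt (Aᴴ * A)).trace).re

/-- The fidelity `F(ρ,σ) = tr √(√ρ σ √ρ)`. -/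
def fidelity {ι : Type*} [Fintype ι] [DecidableEq ι] (ρ σ : Matrix ι ι ℂ) : ℝ :=
  ((psdSqrt (psdSqrt ρ * σ * psdSqrt ρ)).trace).re

/-- The Choi matrix of the qubit amplitude damping channel with damping
probability `q`. -/
def adChoi (q : ℝ) : Matrix (Fin 4) (Fin 4) ℂ :=
  !![1/2, 0, 0, (Real.sqrt (1-q) : ℂ)/2;
     0, ((q : ℝ) : ℂ)/2, 0, 0;
     0, 0, 0, 0;
     (Real.sqrt (1-q) : ℂ)/2, 0, 0, (((1-q : ℝ)) : ℂ)/2]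

/-! Write `A(k,s,c) = k·vvᵀ + c·e₁e₁ᵀ` with `v = e₀ + s·e₃` (`dampingMatrix k s c`), so that
`ρ_q = A(1/2, √(1-q), q/2)`. This family is closed under the products in the fidelity:
`A(k,s,c)·A(k',s',c')·A(k,s,c) = A(k²k'(1+ss')², s, c²c')`, and in particular
`A(k,s,c)² = A(k²(1+s²), s, c²)`. Hence `√A(k,s,c) = A(√(k/(1+s²)), s, √c)`, and taking the
trace gives `F(A(k,s,c), A(k',s',c')) = √(kk')·|1+ss'| + √(cc')`. -/

def dampingMatrix (k s c : ℝ) : Matrix (Fin 4) (Fin 4) ℂ :=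
  !![(k : ℂ), 0, 0, k * s;
     0, c, 0, 0;
     0, 0, 0, 0;
     k * s, 0, 0, k * s ^ 2]

lemma dampingMatrix_isHermitian (k s c : ℝ) : (dampingMatrix k s c).IsHermitian := by
  ext i j
  fin_cases i <;> fin_cases j <;> simp [dampingMatrix]

lemma dampingMatrix_mul_mul (k s c k' s' c' : ℝ) :
    dampingMatrix k s c * dampingMatrix k' s' c' * dampingMatrix k s c
      = dampingMatrix (k ^ 2 * k' * (1 + s * s') ^ 2) s (c ^ 2 * c') := by
  ext i j
  fin_cases i <;> fin_cases j <;> simp [dampingMatrix] <;> ring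

lemma dampingMatrix_mul_self (k s c : ℝ) :
    dampingMatrix k s c * dampingMatrix k s c = dampingMatrix (k ^ 2 * (1 + s ^ 2)) s (c ^ 2) := by
  ext i j
  fin_cases i <;> fin_cases j <;> simp [dampingMatrix] <;> ring

lemma trace_dampingMatrix (k s c : ℝ) :
    (dampingMatrix k s c).trace = ((k * (1 + s ^ 2) + c : ℝ) : ℂ) := by
  simp [dampingMatrix, Matrix.trace, Fin.sum_univ_four]
  ring

lemma dampingMatrix_eq_sqrt_mul_self {k c : ℝ} (s : ℝ) (hk : 0 ≤ k) (hc : 0 ≤ c) :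
    dampingMatrix (√(k / (1 + s ^ 2))) s √c * dampingMatrix (√(k / (1 + s ^ 2))) s √c
      = dampingMatrix k s c := by
  have hs : 0 < 1 + s ^ 2 := by positivity
  rw [dampingMatrix_mul_self, Real.sq_sqrt (by positivity), Real.sq_sqrt hc,
    div_mul_cancel₀ k hs.ne']

lemma dampingMatrix_posSemidef {k c : ℝ} (s : ℝ) (hk : 0 ≤ k) (hc : 0 ≤ c) :
    (dampingMatrix k s c).PosSemidef := by
  rw [← dampingMatrix_eq_sqrt_mul_self s hk hc]
  nth_rewrite 1 [← (dampingMatrix_isHermitian _ s _).eq]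
  exact posSemidef_conjTranspose_mul_self _

open scoped MatrixOrder in
lemma psdSqrt_eq_of_mul_self {ι : Type*} [Fintype ι] [DecidableEq ι] {A B : Matrix ι ι ℂ}
    (hB : B.PosSemidef) (h : B * B = A) : psdSqrt A = B := by
  have hA : A.PosSemidef := by
    rw [← h]
    nth_rewrite 1 [← hB.isHermitian.eq]
    exact posSemidef_conjTranspose_mul_self B
  rw [psdSqrt, dif_pos hA, ← CFC.sqrt_unique h hB.nonneg, CFC.sqrt_eq_real_sqrt A hA.nonneg,
    cfcₙ_eq_cfc, hA.1.cfc_eq]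
  rfl

lemma psdSqrt_dampingMatrix {k c : ℝ} (s : ℝ) (hk : 0 ≤ k) (hc : 0 ≤ c) :
    psdSqrt (dampingMatrix k s c) = dampingMatrix (√(k / (1 + s ^ 2))) s √c :=
  psdSqrt_eq_of_mul_self (dampingMatrix_posSemidef s (Real.sqrt_nonneg _) (Real.sqrt_nonneg _))
    (dampingMatrix_eq_sqrt_mul_self s hk hc)

lemma fidelity_dampingMatrix {k c k' c' : ℝ} (s s' : ℝ) (hk : 0 ≤ k) (hc : 0 ≤ c)
    (hk' : 0 ≤ k') (hc' : 0 ≤ c') :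
    fidelity (dampingMatrix k s c) (dampingMatrix k' s' c')
      = √(k * k') * |1 + s * s'| + √(c * c') := by
  have hs : 0 < 1 + s ^ 2 := by positivity
  rw [fidelity, psdSqrt_dampingMatrix s hk hc, dampingMatrix_mul_mul,
    psdSqrt_dampingMatrix s (by positivity) (by positivity), trace_dampingMatrix, Complex.ofReal_re,
    Real.sq_sqrt (div_nonneg hk hs.le), Real.sq_sqrt hc]
  have hsq : k / (1 + s ^ 2) * k' * (1 + s * s') ^ 2 / (1 + s ^ 2)
      = (√(k * k') * |1 + s * s'| / (1 + s ^ 2)) ^ 2 := by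
    rw [div_pow, mul_pow, Real.sq_sqrt (by positivity), sq_abs]
    field_simp
  rw [hsq, Real.sqrt_sq (by positivity), div_mul_cancel₀ _ hs.ne']

lemma adChoi_eq_dampingMatrix {q : ℝ} (hq : q ≤ 1) :
    adChoi q = dampingMatrix (1 / 2) √(1 - q) (q / 2) := by
  have hs : (√(1 - q) : ℂ) ^ 2 = 1 - q := by
    exact_mod_cast Real.sq_sqrt (sub_nonneg.mpr hq)
  ext i j
  fin_cases i <;> fin_cases j <;> simp [adChoi, dampingMatrix, hs] <;> ring

lemma adChoi_isDensityMatrix {q : ℝ} (hq : q ∈ Set.Icc (0 : ℝ) 1) :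
    IsDensityMatrix (adChoi q) := by
  rw [adChoi_eq_dampingMatrix hq.2]
  refine ⟨dampingMatrix_posSemidef _ (by norm_num) (by linarith [hq.1]), ?_⟩
  rw [trace_dampingMatrix, Real.sq_sqrt (by linarith [hq.2])]
  push_cast
  ring

/-- Fidelity between Choi matrices of qubit amplitude damping channels. -/
theorem fidelity_adChoi (q0 q1 : ℝ)
    (h0 : q0 ∈ Set.Icc (0:ℝ) 1) (h1 : q1 ∈ Set.Icc (0:ℝ) 1) :
    IsDensityMatrix (adChoi q0) ∧ IsDensityMatrix (adChoi q1) ∧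
    fidelity (adChoi q0) (adChoi q1)
      = (1 + Real.sqrt ((1-q0)*(1-q1)) + Real.sqrt (q0*q1)) / 2 := by
  refine ⟨adChoi_isDensityMatrix h0, adChoi_isDensityMatrix h1, ?_⟩
  have hhalf : √(1 / 2 * (1 / 2) : ℝ) = 1 / 2 := Real.sqrt_mul_self (by norm_num)
  have hprod : √(q0 / 2 * (q1 / 2)) = √(q0 * q1) / 2 := by
    rw [show q0 / 2 * (q1 / 2) = q0 * q1 / 2 ^ 2 by ring, Real.sqrt_div' _ (by norm_num),
      Real.sqrt_sq zero_le_two]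
  rw [adChoi_eq_dampingMatrix h0.2, adChoi_eq_dampingMatrix h1.2,
    fidelity_dampingMatrix _ _ (by norm_num) (by linarith [h0.1]) (by norm_num)
      (by linarith [h1.1]),
    abs_of_nonneg (by positivity), ← Real.sqrt_mul (by linarith [h0.2]), hhalf, hprod]
  ring
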